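/- arXiv:2108.07218 — 6 statements merged into one kernel-verified Lean document; each statement's English description precedes it below -/
import Mathlib

section
/- Let γ₁ < γ₂ be the roots of γ(γ−θ) = 1/(Nρ) with Nρ(1+θ) < 1, ρ > 0, and let a* = (ln(1+1/γ₂) − ln(1+1/γ₁))/(γ₂−γ₁). Define U*(a) = (γ₂ e^{−γ₁(a*−a)} − γ₁ e^{−γ₂(a*−a)})/(γ₂−γ₁) for a ∈ [0, a*]. Then U* satisfies the ODE ρ(U*'' − θU*') = U*/N on (0, a*), together with the boundary conditions U*(a*) = 1, U*'(a*) = 0 (smooth pasting), and U*(0) + U*'(0) = 0 (normal reflection). -/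
open Real

/-- The cooperative stopping cutoff `a*`. -/
noncomputable def astarDef (γ₁ γ₂ : ℝ) : ℝ :=
  (Real.log (1 + 1 / γ₂) - Real.log (1 + 1 / γ₁)) / (γ₂ - γ₁)

/-- The cooperative normalized value on the exploration region. -/
noncomputable def UstarDef (γ₁ γ₂ astar : ℝ) (a : ℝ) : ℝ :=
  (γ₂ * Real.exp (-γ₁ * (astar - a)) - γ₁ * Real.exp (-γ₂ * (astar - a))) / (γ₂ - γ₁)

/-!
`U*` is a combination of the two exponential modes `e^{γᵢ (a - a*)}`, and each mode solves the
ODE because `γᵢ` is a root of its characteristic equation `ρ γ (γ - θ) = 1/N`. The coefficients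
`γ₂, -γ₁` make `U*(a*) = 1` and `U*'(a*) = 0`. At `a = 0`, `U* + U*'` is proportional to
`γ₂ (1 + γ₁) e^{-γ₁ a*} - γ₁ (1 + γ₂) e^{-γ₂ a*}`, and `a*` is exactly the point where
`e^{(γ₂ - γ₁) a*} = (1 + 1/γ₂) / (1 + 1/γ₁)` makes this vanish. Taking the logarithms there
needs `1 + 1/γᵢ > 0`, which is where `Nρ(1 + θ) < 1` enters: by Vieta,
`(1 + γ₁)(1 + γ₂) = 1 + θ - 1/(Nρ) < 0`, so `γ₁ < -1` and `γ₂ > 0`.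
-/

theorem hasDerivAt_exp_neg_mul_sub (γ s a : ℝ) :
    HasDerivAt (fun x => exp (-γ * (s - x))) (γ * exp (-γ * (s - a))) a := by
  have h : HasDerivAt (fun x : ℝ => -γ * (s - x)) γ a := by
    simpa using ((hasDerivAt_id a).const_sub s).const_mul (-γ)
  simpa [mul_comm] using h.exp

theorem lt_neg_one_and_pos_of_roots {γ₁ γ₂ θ c : ℝ} (hlt : γ₁ < γ₂) (hc : 0 < c)
    (hθ : 1 + θ < c) (h₁ : γ₁ * (γ₁ - θ) = c) (h₂ : γ₂ * (γ₂ - θ) = c) :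
    γ₁ < -1 ∧ 0 < γ₂ := by
  have hsum : γ₁ + γ₂ = θ := by
    have h : (γ₁ - γ₂) * (γ₁ + γ₂ - θ) = (γ₁ - γ₂) * 0 := by linear_combination h₁ - h₂
    linarith [mul_left_cancel₀ (sub_ne_zero.2 hlt.ne) h]
  have hprod : γ₁ * γ₂ = -c := by
    linear_combination γ₁ * hsum - h₁
  have hshift : (1 + γ₁) * (1 + γ₂) < 0 := by nlinarith
  constructor <;> nlinarith

section UstarDef

variable (γ₁ γ₂ s : ℝ)

theorem hasDerivAt_UstarDef (a : ℝ) :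
    HasDerivAt (UstarDef γ₁ γ₂ s)
      (γ₁ * γ₂ * (exp (-γ₁ * (s - a)) - exp (-γ₂ * (s - a))) / (γ₂ - γ₁)) a :=
  ((((hasDerivAt_exp_neg_mul_sub γ₁ s a).const_mul γ₂).sub
    ((hasDerivAt_exp_neg_mul_sub γ₂ s a).const_mul γ₁)).div_const (γ₂ - γ₁)).congr_deriv (by ring)

theorem deriv_UstarDef : deriv (UstarDef γ₁ γ₂ s) = fun a =>
    γ₁ * γ₂ * (exp (-γ₁ * (s - a)) - exp (-γ₂ * (s - a))) / (γ₂ - γ₁) :=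
  funext fun a => (hasDerivAt_UstarDef γ₁ γ₂ s a).deriv

theorem deriv_deriv_UstarDef (a : ℝ) : deriv (deriv (UstarDef γ₁ γ₂ s)) a =
    γ₁ * γ₂ * (γ₁ * exp (-γ₁ * (s - a)) - γ₂ * exp (-γ₂ * (s - a))) / (γ₂ - γ₁) := by
  rw [deriv_UstarDef]
  exact ((((hasDerivAt_exp_neg_mul_sub γ₁ s a).sub (hasDerivAt_exp_neg_mul_sub γ₂ s a)).const_mul
    (γ₁ * γ₂)).div_const (γ₂ - γ₁)).deriv

theorem UstarDef_ode {N ρ θ : ℝ} (hρ : ρ ≠ 0) (h₁ : γ₁ * (γ₁ - θ) = 1 / (N * ρ))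
    (h₂ : γ₂ * (γ₂ - θ) = 1 / (N * ρ)) (a : ℝ) :
    ρ * (deriv (deriv (UstarDef γ₁ γ₂ s)) a - θ * deriv (UstarDef γ₁ γ₂ s) a) =
      UstarDef γ₁ γ₂ s a / N := by
  have hchar : ∀ γ, γ * (γ - θ) = 1 / (N * ρ) → ρ * (γ * (γ - θ)) = 1 / N := by
    intro γ h
    rw [h, mul_one_div, mul_comm N, ← div_div, div_self hρ]
  rw [deriv_deriv_UstarDef, deriv_UstarDef, UstarDef]
  linear_combination (γ₂ * exp (-γ₁ * (s - a)) / (γ₂ - γ₁)) * hchar γ₁ h₁ -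
    (γ₁ * exp (-γ₂ * (s - a)) / (γ₂ - γ₁)) * hchar γ₂ h₂

theorem UstarDef_self (hne : γ₁ ≠ γ₂) : UstarDef γ₁ γ₂ s s = 1 := by
  simp [UstarDef, div_self (sub_ne_zero.2 hne.symm)]

theorem deriv_UstarDef_self : deriv (UstarDef γ₁ γ₂ s) s = 0 := by
  simp [deriv_UstarDef]

end UstarDef

theorem UstarDef_astarDef_add_deriv_zero {γ₁ γ₂ : ℝ} (hne : γ₁ ≠ γ₂) (hγ₁ : γ₁ ≠ 0)
    (hγ₂ : γ₂ ≠ 0) (h₁ : 0 < 1 + 1 / γ₁) (h₂ : 0 < 1 + 1 / γ₂) :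
    UstarDef γ₁ γ₂ (astarDef γ₁ γ₂) 0 + deriv (UstarDef γ₁ γ₂ (astarDef γ₁ γ₂)) 0 = 0 := by
  have hgap : exp ((γ₂ - γ₁) * astarDef γ₁ γ₂) = (1 + 1 / γ₂) / (1 + 1 / γ₁) := by
    rw [astarDef, mul_div_cancel₀ _ (sub_ne_zero.2 hne.symm), exp_sub, exp_log h₂, exp_log h₁]
  have hmode : exp (-γ₁ * astarDef γ₁ γ₂) =
      exp (-γ₂ * astarDef γ₁ γ₂) * exp ((γ₂ - γ₁) * astarDef γ₁ γ₂) := by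
    rw [← exp_add]; ring_nf
  have hγ₁' : γ₁ + 1 ≠ 0 := fun h => by
    rw [one_add_div hγ₁, h, zero_div] at h₁
    exact h₁.false
  simp only [deriv_UstarDef, UstarDef, sub_zero]
  rw [hmode, hgap, ← add_div, div_eq_zero_iff]
  left
  field_simp
  ring

/-- `U*` satisfies the ODE `ρ(U*'' − θU*') = U*/N` on `(0, a*)`, with
value matching `U*(a*) = 1`, smooth pasting `U*'(a*) = 0`, and the normal
reflection condition `U*(0) + U*'(0) = 0`. -/
theorem cooperative_value_solves_ode (N ρ θ γ₁ γ₂ : ℝ) (hN : 1 ≤ N) (hρ : 0 < ρ)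
    (hmain : N * ρ * (1 + θ) < 1)
    (hlt : γ₁ < γ₂)
    (hroot1 : γ₁ * (γ₁ - θ) = 1 / (N * ρ))
    (hroot2 : γ₂ * (γ₂ - θ) = 1 / (N * ρ)) :
    (∀ a ∈ Set.Ioo 0 (astarDef γ₁ γ₂),
      ρ * (deriv (deriv (UstarDef γ₁ γ₂ (astarDef γ₁ γ₂))) a
            - θ * deriv (UstarDef γ₁ γ₂ (astarDef γ₁ γ₂)) a)
        = UstarDef γ₁ γ₂ (astarDef γ₁ γ₂) a / N) ∧
    UstarDef γ₁ γ₂ (astarDef γ₁ γ₂) (astarDef γ₁ γ₂) = 1 ∧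
    deriv (UstarDef γ₁ γ₂ (astarDef γ₁ γ₂)) (astarDef γ₁ γ₂) = 0 ∧
    UstarDef γ₁ γ₂ (astarDef γ₁ γ₂) 0 + deriv (UstarDef γ₁ γ₂ (astarDef γ₁ γ₂)) 0 = 0 := by
  have hNρ : 0 < N * ρ := mul_pos (by linarith) hρ
  have hθ : 1 + θ < 1 / (N * ρ) := by rwa [lt_div_iff₀ hNρ, mul_comm]
  obtain ⟨hγ₁, hγ₂⟩ := lt_neg_one_and_pos_of_roots hlt (by positivity) hθ hroot1 hroot2
  have h₁ : 0 < 1 + 1 / γ₁ := by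
    rw [one_add_div (by linarith)]
    exact div_pos_of_neg_of_neg (by linarith) (by linarith)
  have h₂ : 0 < 1 + 1 / γ₂ := by positivity
  exact ⟨fun a _ => UstarDef_ode _ _ _ hρ.ne' hroot1 hroot2 a, UstarDef_self _ _ _ hlt.ne,
    deriv_UstarDef_self _ _ _,
    UstarDef_astarDef_add_deriv_zero hlt.ne (by linarith) hγ₂.ne' h₁ h₂⟩
end

section
/- Fix ρ > 0 and θ ∈ ℝ. For N in the range where Nρ(1+θ) < 1, the cooperative cutoff a*(N) = (ln(1+1/γ₂(N)) − ln(1+1/γ₁(N)))/(γ₂(N) − γ₁(N)), where γ₁(N) < γ₂(N) solve γ(γ−θ) = 1/(Nρ), is strictly increasing in N (treated as a real variable). -/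
/-!
With `c = 1 / (Nρ)`, Vieta gives `γ₁ γ₂ = -c`, so `c - γ₁ = -γ₁ (γ₂ + 1)`, `c - γ₂ = -γ₂ (γ₁ + 1)`,
and `a*` is the slope of the secant of `log` over `[c - γ₂, c - γ₁]`. Both endpoints are values
`h γ` of `h x = x (x - 1 - θ)`. Raising `N` lowers `c` and pulls both roots towards `θ / 2`. Since
`-1` and `0` lie between the roots, their gap exceeds `1`, so they stay on opposite sides of the
vertex `(1 + θ) / 2` of `h`, and both endpoints move left. Strict concavity of `log` then makes the
secant slope strictly larger.
-/

open Real

theorem StrictConcaveOn.secant_lt_secant {𝕜 : Type*} [Field 𝕜] [LinearOrder 𝕜]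
    [IsStrictOrderedRing 𝕜] {s : Set 𝕜} {f : 𝕜 → 𝕜} (hf : StrictConcaveOn 𝕜 s f)
    {a₁ b₁ a₂ b₂ : 𝕜} (ha₁ : a₁ ∈ s) (hb₁ : b₁ ∈ s) (ha₂ : a₂ ∈ s) (hb₂ : b₂ ∈ s)
    (hab₁ : a₁ < b₁) (hab₂ : a₂ < b₂) (ha : a₂ < a₁) (hb : b₂ < b₁) :
    (f b₁ - f a₁) / (b₁ - a₁) < (f b₂ - f a₂) / (b₂ - a₂) :=
  calc (f b₁ - f a₁) / (b₁ - a₁) = (f a₁ - f b₁) / (a₁ - b₁) := by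
        rw [← neg_div_neg_eq, neg_sub, neg_sub]
    _ < (f a₂ - f b₁) / (a₂ - b₁) :=
        hf.secant_strict_mono hb₁ ha₂ ha₁ (by linarith) hab₁.ne ha
    _ = (f b₁ - f a₂) / (b₁ - a₂) := by rw [← neg_div_neg_eq, neg_sub, neg_sub]
    _ < (f b₂ - f a₂) / (b₂ - a₂) :=
        hf.secant_strict_mono ha₂ hb₂ hb₁ hab₂.ne' (by linarith) hb

lemma astarDef_eq_secant_log {γ₁ γ₂ c : ℝ} (hprod : γ₁ * γ₂ = -c) (h₁ : c - γ₁ ≠ 0)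
    (h₂ : c - γ₂ ≠ 0) :
    astarDef γ₁ γ₂ = (log (c - γ₁) - log (c - γ₂)) / ((c - γ₁) - (c - γ₂)) := by
  have e₁ : c - γ₁ = -γ₁ * (γ₂ + 1) := by linear_combination hprod
  have e₂ : c - γ₂ = -γ₂ * (γ₁ + 1) := by linear_combination hprod
  rw [e₁] at h₁ ⊢
  rw [e₂] at h₂ ⊢
  obtain ⟨hγ₁, hγ₂₁⟩ := mul_ne_zero_iff.mp h₁
  obtain ⟨hγ₂, hγ₁₁⟩ := mul_ne_zero_iff.mp h₂
  have hlog (γ : ℝ) (hγ : γ ≠ 0) (hγ1 : γ + 1 ≠ 0) : log (1 + 1 / γ) = log (γ + 1) - log γ := by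
    rw [← log_div hγ1 hγ]
    congr 1
    field_simp
  rw [astarDef, hlog γ₁ (neg_ne_zero.mp hγ₁) hγ₁₁, hlog γ₂ (neg_ne_zero.mp hγ₂) hγ₂₁,
    log_mul hγ₁ hγ₂₁, log_mul hγ₂ hγ₁₁, log_neg_eq_log, log_neg_eq_log]
  congr 1 <;> ring

lemma add_eq_and_mul_eq_of_roots {θ c γ₁ γ₂ : ℝ} (hne : γ₁ ≠ γ₂)
    (h₁ : γ₁ * (γ₁ - θ) = c) (h₂ : γ₂ * (γ₂ - θ) = c) : γ₁ + γ₂ = θ ∧ γ₁ * γ₂ = -c := by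
  have hsum : γ₁ + γ₂ = θ := by
    have h : (γ₂ - γ₁) * (γ₁ + γ₂ - θ) = 0 := by linear_combination h₂ - h₁
    linarith [(mul_eq_zero.mp h).resolve_left (sub_ne_zero.mpr hne.symm)]
  exact ⟨hsum, by linear_combination γ₁ * hsum - h₁⟩

lemma mem_Ioo_roots_of_lt {θ c γ₁ γ₂ x : ℝ} (hlt : γ₁ < γ₂)
    (h₁ : γ₁ * (γ₁ - θ) = c) (h₂ : γ₂ * (γ₂ - θ) = c) (hx : x * (x - θ) < c) :
    γ₁ < x ∧ x < γ₂ := by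
  obtain ⟨hsum, hprod⟩ := add_eq_and_mul_eq_of_roots hlt.ne h₁ h₂
  have hneg : (x - γ₁) * (x - γ₂) < 0 := by linear_combination hx - x * hsum + hprod
  rcases mul_neg_iff.mp hneg with ⟨h, _⟩ | ⟨h, _⟩
  · constructor <;> linarith
  · linarith

lemma sub_root_sub_sub_root {θ c d γ δ : ℝ} (hγ : γ * (γ - θ) = c) (hδ : δ * (δ - θ) = d) :
    (c - γ) - (d - δ) = (γ - δ) * (γ + δ - (1 + θ)) := by
  linear_combination -hγ + hδ

/-- Fixing `ρ > 0` and `θ`, for `N₁ < N₂` (real-valued team sizes)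
in the range where Assumption 1 holds, the cooperative cutoff is strictly
increasing in `N`: if `γ₁ < γ₂` are the roots for `N₁` and `δ₁ < δ₂` those for
`N₂`, then `a*(N₁) < a*(N₂)`. -/
theorem cooperative_cutoff_increasing_in_N (ρ θ N₁ N₂ γ₁ γ₂ δ₁ δ₂ : ℝ)
    (hρ : 0 < ρ) (hN₁ : 1 ≤ N₁) (hN : N₁ < N₂)
    (hmain₂ : N₂ * ρ * (1 + θ) < 1)
    (hlt : γ₁ < γ₂) (hlt' : δ₁ < δ₂)
    (hroot1 : γ₁ * (γ₁ - θ) = 1 / (N₁ * ρ))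
    (hroot2 : γ₂ * (γ₂ - θ) = 1 / (N₁ * ρ))
    (hroot1' : δ₁ * (δ₁ - θ) = 1 / (N₂ * ρ))
    (hroot2' : δ₂ * (δ₂ - θ) = 1 / (N₂ * ρ)) :
    astarDef γ₁ γ₂ < astarDef δ₁ δ₂ := by
  set c₁ := 1 / (N₁ * ρ)
  set c₂ := 1 / (N₂ * ρ)
  have hN₁ρ : 0 < N₁ * ρ := mul_pos (by linarith) hρ
  have hN₂ρ : 0 < N₂ * ρ := mul_pos (by linarith) hρ
  have hc₂₁ : c₂ < c₁ := one_div_lt_one_div_of_lt hN₁ρ (by gcongr)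
  have hc₂ : 1 + θ < c₂ := by rw [lt_div_iff₀ hN₂ρ]; linarith
  have hc₂pos : 0 < c₂ := one_div_pos.mpr hN₂ρ
  obtain ⟨hsum', hprod'⟩ := add_eq_and_mul_eq_of_roots hlt'.ne hroot1' hroot2'
  obtain ⟨-, hprod⟩ := add_eq_and_mul_eq_of_roots hlt.ne hroot1 hroot2
  have hδ₁ : δ₁ < -1 := (mem_Ioo_roots_of_lt hlt' hroot1' hroot2' (by linarith)).1
  have hδ₂ : 0 < δ₂ := (mem_Ioo_roots_of_lt hlt' hroot1' hroot2' (by rwa [zero_mul])).2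
  have hγ₁ : γ₁ < δ₁ := (mem_Ioo_roots_of_lt hlt hroot1 hroot2 (hroot1' ▸ hc₂₁)).1
  have hγ₂ : δ₂ < γ₂ := (mem_Ioo_roots_of_lt hlt hroot1 hroot2 (hroot2' ▸ hc₂₁)).2
  have hpos : 0 < c₂ - δ₂ := by
    rw [show c₂ - δ₂ = δ₂ * (-1 - δ₁) by linear_combination hprod']
    exact mul_pos hδ₂ (by linarith)
  have hleft : c₂ - δ₂ < c₁ - γ₂ := by
    rw [← sub_pos, sub_root_sub_sub_root hroot2 hroot2']
    exact mul_pos (by linarith) (by linarith)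
  have hright : c₂ - δ₁ < c₁ - γ₁ := by
    rw [← sub_pos, sub_root_sub_sub_root hroot1 hroot1']
    exact mul_pos_of_neg_of_neg (by linarith) (by linarith)
  rw [astarDef_eq_secant_log hprod (by linarith) (by linarith),
    astarDef_eq_secant_log hprod' (by linarith) (by linarith)]
  exact strictConcaveOn_log_Ioi.secant_lt_secant (Set.mem_Ioi.mpr (by linarith))
    (Set.mem_Ioi.mpr (by linarith)) (Set.mem_Ioi.mpr hpos) (Set.mem_Ioi.mpr (by linarith))
    (by linarith) (by linarith) hleft hright
end

section
/- Fix N ≥ 1, θ ∈ ℝ. For ρ > 0 with Nρ(1+θ) < 1, the cooperative cutoff a*(ρ) defined via the roots of γ(γ−θ) = 1/(Nρ) is strictly increasing in ρ (equivalently, strictly decreasing in the discount rate r = σ²/(2ρ)). -/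
set_option maxHeartbeats 800000


/-- Fixing `N ≥ 1` and `θ`, for `ρ₁ < ρ₂` in the range where
Assumption 1 holds, the cooperative cutoff is strictly increasing in `ρ`
(equivalently strictly decreasing in the discount rate `r = σ²/(2ρ)`). -/
theorem cooperative_cutoff_increasing_in_rho (N θ ρ₁ ρ₂ γ₁ γ₂ δ₁ δ₂ : ℝ)
    (hN : 1 ≤ N) (hρ₁ : 0 < ρ₁) (hρ : ρ₁ < ρ₂)
    (hmain₂ : N * ρ₂ * (1 + θ) < 1)
    (hlt : γ₁ < γ₂) (hlt' : δ₁ < δ₂)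
    (hroot1 : γ₁ * (γ₁ - θ) = 1 / (N * ρ₁))
    (hroot2 : γ₂ * (γ₂ - θ) = 1 / (N * ρ₁))
    (hroot1' : δ₁ * (δ₁ - θ) = 1 / (N * ρ₂))
    (hroot2' : δ₂ * (δ₂ - θ) = 1 / (N * ρ₂)) :
    astarDef γ₁ γ₂ < astarDef δ₁ δ₂ := by
  have hN0 : 0 < N := lt_of_lt_of_le zero_lt_one hN
  have hρ₂ : 0 < ρ₂ := hρ₁.trans hρ
  have hNρ₁ : 0 < N * ρ₁ := mul_pos hN0 hρ₁
  have hNρ₂ : 0 < N * ρ₂ := mul_pos hN0 hρ₂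
  set c₁ : ℝ := 1 / (N * ρ₁) with hc₁def
  set c₂ : ℝ := 1 / (N * ρ₂) with hc₂def
  have hc₁pos : 0 < c₁ := by positivity
  have hc₂pos : 0 < c₂ := by positivity
  have hc21 : c₂ < c₁ := by
    apply one_div_lt_one_div_of_lt hNρ₁
    exact mul_lt_mul_of_pos_left hρ hN0
  have hc2θ : 1 + θ < c₂ := by
    rw [hc₂def, lt_div_iff₀ hNρ₂]
    have h : (1 + θ) * (N * ρ₂) = N * ρ₂ * (1 + θ) := by ring
    rw [h]; exact hmain₂
  -- sums of roots
  have hsumγ : γ₁ + γ₂ = θ := by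
    have h : (γ₂ - γ₁) * (γ₁ + γ₂ - θ) = 0 := by linear_combination hroot2 - hroot1
    rcases mul_eq_zero.mp h with h | h
    · linarith
    · linarith
  have hsumδ : δ₁ + δ₂ = θ := by
    have h : (δ₂ - δ₁) * (δ₁ + δ₂ - θ) = 0 := by linear_combination hroot2' - hroot1'
    rcases mul_eq_zero.mp h with h | h
    · linarith
    · linarith
  -- products of roots
  have hprodγ : γ₁ * γ₂ = -c₁ := by linear_combination -hroot1 + γ₁ * hsumγ
  have hprodδ : δ₁ * δ₂ = -c₂ := by linear_combination -hroot1' + δ₁ * hsumδ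
  -- sign facts
  have hγ₂pos : 0 < γ₂ := by
    by_contra h
    push_neg at h
    have h1 : γ₁ < 0 := lt_of_lt_of_le hlt h
    have h2 := mul_nonneg (neg_nonneg.mpr h1.le) (neg_nonneg.mpr h)
    rw [neg_mul_neg] at h2
    linarith [hprodγ, hc₁pos]
  have hδ₂pos : 0 < δ₂ := by
    by_contra h
    push_neg at h
    have h1 : δ₁ < 0 := lt_of_lt_of_le hlt' h
    have h2 := mul_nonneg (neg_nonneg.mpr h1.le) (neg_nonneg.mpr h)
    rw [neg_mul_neg] at h2
    linarith [hprodδ, hc₂pos]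
  have hγ₁lt : γ₁ < -1 := by
    have hfac : (γ₁ + 1) * (γ₂ + 1) = -c₁ + θ + 1 := by
      linear_combination hprodγ + hsumγ
    by_contra h
    push_neg at h
    have h1 : 0 ≤ γ₁ + 1 := by linarith
    have h2 := mul_nonneg h1 (by linarith : (0:ℝ) ≤ γ₂ + 1)
    rw [hfac] at h2
    linarith
  have hδ₁lt : δ₁ < -1 := by
    have hfac : (δ₁ + 1) * (δ₂ + 1) = -c₂ + θ + 1 := by
      linear_combination hprodδ + hsumδ
    by_contra h
    push_neg at h
    have h1 : 0 ≤ δ₁ + 1 := by linarith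
    have h2 := mul_nonneg h1 (by linarith : (0:ℝ) ≤ δ₂ + 1)
    rw [hfac] at h2
    linarith
  -- gaps
  set s₁ : ℝ := γ₂ - γ₁ with hs₁def
  set s₂ : ℝ := δ₂ - δ₁ with hs₂def
  have hs₁gt1 : 1 < s₁ := by simp only [hs₁def]; linarith
  have hs₂gt1 : 1 < s₂ := by simp only [hs₂def]; linarith
  have hs₁pos : 0 < s₁ := by linarith
  have hs₂pos : 0 < s₂ := by linarith
  have hq1 : s₁ ^ 2 = θ ^ 2 + 4 * c₁ := by
    simp only [hs₁def]
    linear_combination (γ₁ + γ₂ + θ) * hsumγ - 4 * hprodγ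
  have hq2 : s₂ ^ 2 = θ ^ 2 + 4 * c₂ := by
    simp only [hs₂def]
    linear_combination (δ₁ + δ₂ + θ) * hsumδ - 4 * hprodδ
  have hs21 : s₂ < s₁ := by
    by_contra h
    push_neg at h
    have h2 : s₁ ^ 2 ≤ s₂ ^ 2 := pow_le_pow_left₀ hs₁pos.le h 2
    linarith [hq1, hq2, hc21]
  have hq3 : 2 * (γ₁ * δ₂ - δ₁ * γ₂) = θ * (s₂ - s₁) := by
    simp only [hs₁def, hs₂def]
    linear_combination (δ₂ - δ₁) * hsumγ + (γ₁ - γ₂) * hsumδ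
  -- log arguments
  have hγ₁ne : γ₁ ≠ 0 := by intro h; rw [h] at hγ₁lt; norm_num at hγ₁lt
  have hδ₁ne : δ₁ ≠ 0 := by intro h; rw [h] at hδ₁lt; norm_num at hδ₁lt
  have hx₂ : (0:ℝ) < 1 + 1 / γ₂ := by positivity
  have hy₂ : (0:ℝ) < 1 + 1 / δ₂ := by positivity
  have hx₁ : (0:ℝ) < 1 + 1 / γ₁ := by
    have h : 1 + 1 / γ₁ = (γ₁ + 1) / γ₁ := by field_simp
    rw [h]
    exact div_pos_of_neg_of_neg (by linarith) (by linarith)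
  have hy₁ : (0:ℝ) < 1 + 1 / δ₁ := by
    have h : 1 + 1 / δ₁ = (δ₁ + 1) / δ₁ := by field_simp
    rw [h]
    exact div_pos_of_neg_of_neg (by linarith) (by linarith)
  -- positive ratio forms
  set A₁ : ℝ := (γ₂ + 1) * (-γ₁) with hA₁def
  set B₁ : ℝ := (-(γ₁ + 1)) * γ₂ with hB₁def
  set A₂ : ℝ := (δ₂ + 1) * (-δ₁) with hA₂def
  set B₂ : ℝ := (-(δ₁ + 1)) * δ₂ with hB₂def
  have hA₁pos : 0 < A₁ := mul_pos (by linarith) (by linarith)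
  have hB₁pos : 0 < B₁ := mul_pos (by linarith) hγ₂pos
  have hA₂pos : 0 < A₂ := mul_pos (by linarith) (by linarith)
  have hB₂pos : 0 < B₂ := mul_pos (by linarith) hδ₂pos
  have hγ₂ne : γ₂ ≠ 0 := ne_of_gt hγ₂pos
  have hδ₂ne : δ₂ ≠ 0 := ne_of_gt hδ₂pos
  have hlogγ : Real.log (1 + 1 / γ₂) - Real.log (1 + 1 / γ₁) = Real.log (A₁ / B₁) := by
    rw [← Real.log_div (ne_of_gt hx₂) (ne_of_gt hx₁)]
    congr 1
    rw [hA₁def, hB₁def, div_eq_div_iff (ne_of_gt hx₁) (ne_of_gt hB₁pos)]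
    field_simp
    ring
  have hlogδ : Real.log (1 + 1 / δ₂) - Real.log (1 + 1 / δ₁) = Real.log (A₂ / B₂) := by
    rw [← Real.log_div (ne_of_gt hy₂) (ne_of_gt hy₁)]
    congr 1
    rw [hA₂def, hB₂def, div_eq_div_iff (ne_of_gt hy₁) (ne_of_gt hB₂pos)]
    field_simp
    ring
  -- A₂/B₂ > 1
  have hR₂gt1 : 1 < A₂ / B₂ := by
    rw [lt_div_iff₀ hB₂pos, one_mul]
    simp only [hA₂def, hB₂def]
    have h : (δ₂ + 1) * (-δ₁) - (-(δ₁ + 1)) * δ₂ = δ₂ - δ₁ := by ring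
    linarith [h, hlt']
  -- key comparison A₁/B₁ < A₂/B₂
  have hA1B2 : A₁ * B₂ = (γ₁ - c₁) * (δ₂ - c₂) := by
    simp only [hA₁def, hB₂def]
    linear_combination (δ₁ * δ₂ + δ₂) * hprodγ + (γ₁ - c₁) * hprodδ
  have hA2B1 : A₂ * B₁ = (δ₁ - c₂) * (γ₂ - c₁) := by
    simp only [hA₂def, hB₁def]
    linear_combination (γ₁ * γ₂ + γ₂) * hprodδ + (δ₁ - c₂) * hprodγ
  have hkeypos : 0 < (s₁ - s₂) * (s₁ * s₂ + θ ^ 2 + 2 * θ) := by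
    apply mul_pos (by linarith)
    have h1 := mul_pos (by linarith : (0:ℝ) < s₁ - 1) (by linarith : (0:ℝ) < s₂ - 1)
    have h2 : (s₁ - 1) * (s₂ - 1) = s₁ * s₂ - s₁ - s₂ + 1 := by ring
    have h3 := sq_nonneg (θ + 1)
    have h4 : (θ + 1) ^ 2 = θ ^ 2 + 2 * θ + 1 := by ring
    linarith
  have hDiff : (δ₁ - c₂) * (γ₂ - c₁) - (γ₁ - c₁) * (δ₂ - c₂)
      = (s₁ - s₂) * (s₁ * s₂ + θ ^ 2 + 2 * θ) / 4 := by
    linear_combination (-(1:ℝ)/2) * hq3 - s₂/4 * hq1 + s₁/4 * hq2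
  have hRlt : A₁ / B₁ < A₂ / B₂ := by
    have h5 : 0 < (δ₁ - c₂) * (γ₂ - c₁) - (γ₁ - c₁) * (δ₂ - c₂) := by
      rw [hDiff]
      exact div_pos hkeypos (by norm_num)
    rw [div_lt_div_iff₀ hB₁pos hB₂pos, hA1B2, hA2B1]
    linarith [h5]
  -- conclude
  have hlogR₂pos : 0 < Real.log (A₂ / B₂) := Real.log_pos hR₂gt1
  have hloglt : Real.log (A₁ / B₁) < Real.log (A₂ / B₂) :=
    Real.log_lt_log (div_pos hA₁pos hB₁pos) hRlt
  unfold astarDef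
  rw [hlogγ, hlogδ]
  calc Real.log (A₁ / B₁) / s₁ < Real.log (A₂ / B₂) / s₁ :=
        (div_lt_div_iff_of_pos_right hs₁pos).mpr hloglt
    _ < Real.log (A₂ / B₂) / s₂ := div_lt_div_of_pos_left hlogR₂pos hs₂pos hs21
end

section
/- Let u_f solve ρ(u'' − θu') = u − f on an interval ending at a_R with initial conditions u(a_R) = u⁰, u'(a_R) = u¹, where ρ > 0, θ, f ∈ ℝ. If u⁰ ≥ f and u¹ ≤ 0, then u'(a_L) ≤ 0 for every a_L < a_R, with equality u'(a_L) = 0 if and only if u⁰ = f and u¹ = 0. -/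
/-!
With `v = u - f` the equation reads `v'' = θ v' + v / ρ`, whose characteristic polynomial
`x² - θ x - 1/ρ` has roots `L > 0 > M`. It factors into the first-order equations
`(v' - M v)' = L (v' - M v)` and `(v' - L v)' = M (v' - L v)`, so both combinations are
exponentials, and `(L - M) v' = L (v' - M v) - M (v' - L v)` gives
`u'(a_L) = α u¹ - β (u⁰ - f)` with `α, β > 0` whenever `a_L < a_R`.
-/

open Real

lemma exists_pos_neg_roots (θ c : ℝ) (hc : 0 < c) :
    ∃ L M : ℝ, 0 < L ∧ M < 0 ∧ L + M = θ ∧ L * M = -c := by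
  have hs := sq_sqrt (by positivity : 0 ≤ θ ^ 2 + 4 * c)
  have hsqrt := sqrt_nonneg (θ ^ 2 + 4 * c)
  have hθ : θ < √(θ ^ 2 + 4 * c) := by nlinarith
  have hθ' : -θ < √(θ ^ 2 + 4 * c) := by nlinarith
  refine ⟨(θ + √(θ ^ 2 + 4 * c)) / 2, (θ - √(θ ^ 2 + 4 * c)) / 2, by linarith, by linarith,
    by ring, by linear_combination (-1 / 4 : ℝ) * hs⟩

lemma eq_mul_exp_of_hasDerivAt {p : ℝ → ℝ} {c : ℝ} (hp : ∀ x, HasDerivAt p (c * p x) x)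
    (a b : ℝ) : p a = p b * exp (c * (a - b)) := by
  have hconst : ∀ x, HasDerivAt (fun x => p x * exp (-c * x)) 0 x := fun x =>
    ((hp x).mul ((hasDerivAt_id x).const_mul (-c)).exp).congr_deriv (by ring)
  have h := is_const_of_deriv_eq_zero (fun x => (hconst x).differentiableAt)
    (fun x => (hconst x).deriv) a b
  calc p a = p a * exp (-c * a) * exp (c * a) := by rw [mul_assoc, ← exp_add]; simp
    _ = p b * exp (c * (a - b)) := by rw [h, mul_assoc, ← exp_add]; ring_nf

section Factorization

variable {u u' : ℝ → ℝ} {L M f : ℝ}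
  (hu : ∀ x, HasDerivAt u (u' x) x)
  (hu' : ∀ x, HasDerivAt u' ((L + M) * u' x - L * M * (u x - f)) x)
include hu hu'

lemma hasDerivAt_sub_mul_of_factored (x : ℝ) :
    HasDerivAt (fun y => u' y - M * (u y - f)) (L * (u' x - M * (u x - f))) x :=
  ((hu' x).sub (((hu x).sub_const f).const_mul M)).congr_deriv (by ring)

lemma sub_mul_deriv_eq_of_factored (a b : ℝ) :
    (L - M) * u' a = u' b * (L * exp (L * (a - b)) - M * exp (M * (a - b)))
      + L * M * (u b - f) * (exp (M * (a - b)) - exp (L * (a - b))) := by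
  have hp := eq_mul_exp_of_hasDerivAt (hasDerivAt_sub_mul_of_factored hu hu') a b
  have hq := eq_mul_exp_of_hasDerivAt
    (hasDerivAt_sub_mul_of_factored (L := M) (M := L) (f := f) hu
      (fun x => (hu' x).congr_deriv (by ring))) a b
  linear_combination L * hp - M * hq

lemma exists_deriv_eq_pos_mul_sub_pos_mul (hL : 0 < L) (hM : M < 0) {a b : ℝ} (hab : a < b) :
    ∃ α β : ℝ, 0 < α ∧ 0 < β ∧ u' a = α * u' b - β * (u b - f) := by
  have hLM : 0 < L - M := by linarith
  have hexp : exp (L * (a - b)) < exp (M * (a - b)) :=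
    exp_lt_exp.mpr (mul_lt_mul_of_neg_right (by linarith) (by linarith))
  refine ⟨(L * exp (L * (a - b)) - M * exp (M * (a - b))) / (L - M),
    -(L * M) * (exp (M * (a - b)) - exp (L * (a - b))) / (L - M), ?_, ?_, ?_⟩
  · have hLexp := mul_pos hL (exp_pos (L * (a - b)))
    have hMexp := mul_neg_of_neg_of_pos hM (exp_pos (M * (a - b)))
    exact div_pos (by linarith) hLM
  · exact div_pos (mul_pos (neg_pos.mpr (mul_neg_of_pos_of_neg hL hM)) (sub_pos.mpr hexp)) hLM
  · rw [div_mul_eq_mul_div, div_mul_eq_mul_div, div_sub_div_same, eq_div_iff hLM.ne']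
    linear_combination sub_mul_deriv_eq_of_factored hu hu' a b

end Factorization

lemma mul_sub_mul_nonpos_and_eq_zero_iff {α β x y : ℝ} (hα : 0 < α) (hβ : 0 < β)
    (hx : x ≤ 0) (hy : 0 ≤ y) : α * x - β * y ≤ 0 ∧ (α * x - β * y = 0 ↔ y = 0 ∧ x = 0) := by
  have hαx : α * x ≤ 0 := mul_nonpos_of_nonneg_of_nonpos hα.le hx
  have hβy : 0 ≤ β * y := mul_nonneg hβ.le hy
  refine ⟨by linarith, fun h => ?_, fun ⟨hy0, hx0⟩ => by simp [hy0, hx0]⟩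
  exact ⟨(mul_eq_zero.mp (by linarith : β * y = 0)).resolve_left hβ.ne',
    (mul_eq_zero.mp (by linarith : α * x = 0)).resolve_left hα.ne'⟩

/-- Let `u` solve `ρ(u'' − θu') = u − f` with terminal data
`u(a_R) = u⁰ ≥ f` and `u'(a_R) = u¹ ≤ 0`. Then `u'(a_L) ≤ 0` for every
`a_L < a_R`, with `u'(a_L) = 0` if and only if `u⁰ = f` and `u¹ = 0`. -/
theorem ode_ranking_sign (ρ θ f u0 u1 aR : ℝ) (hρ : 0 < ρ)
    (u : ℝ → ℝ) (hu : ContDiff ℝ 2 u)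
    (hODE : ∀ a : ℝ, ρ * (deriv (deriv u) a - θ * deriv u a) = u a - f)
    (hval : u aR = u0) (hder : deriv u aR = u1)
    (h0 : f ≤ u0) (h1 : u1 ≤ 0) :
    ∀ aL : ℝ, aL < aR →
      deriv u aL ≤ 0 ∧ (deriv u aL = 0 ↔ (u0 = f ∧ u1 = 0)) := by
  intro aL haL
  obtain ⟨L, M, hL, hM, hsum, hprod⟩ := exists_pos_neg_roots θ ρ⁻¹ (inv_pos.mpr hρ)
  have hderiv (x : ℝ) : HasDerivAt u (deriv u x) x :=
    (hu.differentiable two_ne_zero x).hasDerivAt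
  have hderiv2 (x : ℝ) :
      HasDerivAt (deriv u) ((L + M) * deriv u x - L * M * (u x - f)) x := by
    refine (hu.differentiable_deriv_two x).hasDerivAt.congr_deriv ?_
    rw [hsum, hprod, ← hODE x]
    field_simp
    ring
  obtain ⟨α, β, hα, hβ, hrep⟩ :=
    exists_deriv_eq_pos_mul_sub_pos_mul hderiv hderiv2 hL hM haL
  rw [hrep, hval, hder, ← sub_eq_zero (a := u0)]
  exact mul_sub_mul_nonpos_and_eq_zero_iff hα hβ h1 (sub_nonneg.mpr h0)
end

section
/- Let ρ > 0, θ, f ∈ ℝ, a_L < a_R, and let u(·|f, u⁰, u¹) be the solution to u = f + ρ(u'' − θu') with u(a_R) = u⁰, u'(a_R) = u¹. Then u(a_L|f, u⁰, u¹) is strictly increasing in u⁰ and strictly decreasing in f and in u¹, while u'(a_L|f, u⁰, u¹) is strictly decreasing in u⁰ and strictly increasing in f and in u¹. -/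
/-!
The homogeneous operator factors as `ρ (D² - θ D) - 1 = ρ (D - p)(D + q)`, where
`p, q > 0`. For a solution `z`, the combinations `z' + q z` and `z' - p z` are pure exponentials,
which gives `(p + q) z'(a)` in closed form from the terminal data at `b`. If `z(b) ≥ 0 ≥ z'(b)`,
not both zero, that formula makes `z'` negative on `(-∞, b)`, so `z` is strictly decreasing there.
The difference of two solutions, shifted by the difference of the forcing terms, is such a `z`
(up to sign) in each of the three comparisons.
-/

open Real Set

lemma eq_mul_exp_of_hasDerivAt_const_mul {r : ℝ} {F : ℝ → ℝ}
    (hF : ∀ t, HasDerivAt F (r * F t) t) (a b : ℝ) :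
    F a = F b * exp (r * (a - b)) := by
  have hconst : ∀ t, HasDerivAt (fun t => F t * exp (t * -r)) 0 t := fun t =>
    ((hF t).mul (hasDerivAt_mul_const (-r)).exp).congr_deriv (by ring)
  have := is_const_of_deriv_eq_zero (fun t => (hconst t).differentiableAt)
    (fun t => (hconst t).deriv) a b
  calc F a = F a * exp (a * -r) * exp (r * a) := by
        rw [mul_assoc, ← exp_add, show a * -r + r * a = 0 by ring, exp_zero, mul_one]
    _ = F b * exp (r * (a - b)) := by
      rw [this, mul_assoc, ← exp_add]; ring_nf

lemma exists_pos_char_roots {ρ : ℝ} (hρ : 0 < ρ) (θ : ℝ) :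
    ∃ p q : ℝ, 0 < p ∧ 0 < q ∧ p - q = θ ∧ p * q * ρ = 1 := by
  set D := √(θ ^ 2 + 4 / ρ)
  have hθD : |θ| < D := by
    rw [← sqrt_sq_eq_abs]
    exact sqrt_lt_sqrt (sq_nonneg θ) (by linarith [div_pos four_pos hρ])
  have hD : D ^ 2 * ρ = θ ^ 2 * ρ + 4 := by
    rw [sq_sqrt (by positivity)]; field_simp
  obtain ⟨hθ₁, hθ₂⟩ := abs_lt.1 hθD
  exact ⟨(D + θ) / 2, (D - θ) / 2, by linarith, by linarith, by ring,
    by linear_combination hD / 4⟩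

section Homogeneous

variable {p q : ℝ} {z z' : ℝ → ℝ}
  (hz : ∀ t, HasDerivAt z (z' t) t)
  (hz' : ∀ t, HasDerivAt z' ((p - q) * z' t + p * q * z t) t)
include hz hz'

lemma mul_deriv_eq_of_terminal (a b : ℝ) :
    (p + q) * z' a = z' b * (p * exp (p * (a - b)) + q * exp (-q * (a - b)))
      + p * q * z b * (exp (p * (a - b)) - exp (-q * (a - b))) := by
  have hY := eq_mul_exp_of_hasDerivAt_const_mul (F := fun t => z' t + q * z t) (r := p)
    (fun t => ((hz' t).add ((hz t).const_mul q)).congr_deriv (by ring)) a b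
  have hX := eq_mul_exp_of_hasDerivAt_const_mul (F := fun t => z' t - p * z t) (r := -q)
    (fun t => ((hz' t).sub ((hz t).const_mul p)).congr_deriv (by ring)) a b
  linear_combination p * hY + q * hX

variable (hp : 0 < p) (hq : 0 < q) {b : ℝ} (hzb : 0 ≤ z b) (hz'b : z' b ≤ 0)
  (hne : 0 < z b ∨ z' b < 0)
include hp hq hzb hz'b hne

lemma deriv_neg_of_terminal {a : ℝ} (hab : a < b) : z' a < 0 := by
  have hE : exp (p * (a - b)) < exp (-q * (a - b)) := exp_lt_exp.2 (by nlinarith)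
  have hsum : 0 < p * exp (p * (a - b)) + q * exp (-q * (a - b)) := by positivity
  have hpqz : 0 ≤ p * q * z b := by positivity
  have h₁ := mul_nonpos_of_nonpos_of_nonneg hz'b hsum.le
  have h₂ := mul_nonpos_of_nonneg_of_nonpos hpqz (sub_nonpos.2 hE.le)
  refine neg_of_mul_neg_right (a := p + q) ?_ (by positivity)
  rw [mul_deriv_eq_of_terminal hz hz']
  rcases hne with hzb | hz'b
  · linarith [mul_neg_of_pos_of_neg (by positivity : 0 < p * q * z b) (sub_neg.2 hE)]
  · linarith [mul_neg_of_neg_of_pos hz'b hsum]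

lemma strictAntiOn_Iic_of_terminal : StrictAntiOn z (Iic b) := by
  refine strictAntiOn_of_deriv_neg (convex_Iic b)
    (fun t _ => (hz t).continuousAt.continuousWithinAt) fun t ht => ?_
  rw [interior_Iic] at ht
  rw [(hz t).deriv]
  exact deriv_neg_of_terminal hz hz' hp hq hzb hz'b hne ht

end Homogeneous

lemma sub_lt_sub_and_deriv_lt_of_ode {ρ θ f g : ℝ} (hρ : 0 < ρ) {u v : ℝ → ℝ}
    (hu : ContDiff ℝ 2 u) (hv : ContDiff ℝ 2 v)
    (hODEu : ∀ a : ℝ, ρ * (deriv (deriv u) a - θ * deriv u a) = u a - f)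
    (hODEv : ∀ a : ℝ, ρ * (deriv (deriv v) a - θ * deriv v a) = v a - g)
    {a b : ℝ} (hab : a < b) (hzb : 0 ≤ v b - u b - (g - f))
    (hz'b : deriv v b ≤ deriv u b) (hne : 0 < v b - u b - (g - f) ∨ deriv v b < deriv u b) :
    v b - u b < v a - u a ∧ deriv v a < deriv u a := by
  obtain ⟨p, q, hp, hq, rfl, hpq⟩ := exists_pos_char_roots hρ θ
  have hz : ∀ t, HasDerivAt (fun t => v t - u t - (g - f)) (deriv v t - deriv u t) t :=
    fun t => ((hv.differentiable two_ne_zero t).hasDerivAt.sub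
      (hu.differentiable two_ne_zero t).hasDerivAt).sub_const _
  have hz' : ∀ t, HasDerivAt (fun t => deriv v t - deriv u t)
      ((p - q) * (deriv v t - deriv u t) + p * q * (v t - u t - (g - f))) t := fun t =>
    ((hv.differentiable_deriv_two t).hasDerivAt.sub
      (hu.differentiable_deriv_two t).hasDerivAt).congr_deriv
      (by linear_combination (p * q) * (hODEv t - hODEu t) - (deriv (deriv v) t
        - deriv (deriv u) t - (p - q) * (deriv v t - deriv u t)) * hpq)
  have hz'b' := sub_nonpos.2 hz'b
  have hne' := hne.imp_right sub_neg.2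
  have hanti := strictAntiOn_Iic_of_terminal hz hz' hp hq hzb hz'b' hne'
  exact ⟨by linarith [hanti (mem_Iic.2 hab.le) (mem_Iic.2 le_rfl) hab],
    sub_neg.1 (deriv_neg_of_terminal hz hz' hp hq hzb hz'b' hne' hab)⟩

/-- Lemma `ode-ranking-right`: Let `u` and `v` solve
`ρ(w'' − θw') = w − f` with respective forcing terms and terminal data at `a_R`.
Then, at any `a_L < a_R`, the value is strictly increasing in the terminal value
`u⁰` and strictly decreasing in `f` and in the terminal derivative `u¹`, while
the derivative is strictly decreasing in `u⁰` and strictly increasing in `f`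
and in `u¹`. -/
theorem ode_ranking_monotone (ρ θ aR : ℝ) (hρ : 0 < ρ)
    (f g u0 v0 u1 v1 : ℝ)
    (u v : ℝ → ℝ) (hu : ContDiff ℝ 2 u) (hv : ContDiff ℝ 2 v)
    (hODEu : ∀ a : ℝ, ρ * (deriv (deriv u) a - θ * deriv u a) = u a - f)
    (hODEv : ∀ a : ℝ, ρ * (deriv (deriv v) a - θ * deriv v a) = v a - g)
    (hvalu : u aR = u0) (hderu : deriv u aR = u1)
    (hvalv : v aR = v0) (hderv : deriv v aR = v1) :
    ∀ aL : ℝ, aL < aR →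
      -- strictly increasing in the terminal value `u⁰`
      ((f = g ∧ u1 = v1 ∧ u0 < v0) → (u aL < v aL ∧ deriv v aL < deriv u aL)) ∧
      -- strictly decreasing in the forcing term `f`
      ((u0 = v0 ∧ u1 = v1 ∧ f < g) → (v aL < u aL ∧ deriv u aL < deriv v aL)) ∧
      -- strictly decreasing in the terminal derivative `u¹`
      ((f = g ∧ u0 = v0 ∧ u1 < v1) → (v aL < u aL ∧ deriv u aL < deriv v aL)) := by
  intro aL haL
  subst hvalu hderu hvalv hderv
  refine ⟨?_, ?_, ?_⟩
  · rintro ⟨rfl, h₁, h₀⟩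
    have := sub_lt_sub_and_deriv_lt_of_ode hρ hu hv hODEu hODEv haL (by linarith) h₁.ge
      (Or.inl (by linarith))
    exact ⟨by linarith, this.2⟩
  · rintro ⟨h₀, h₁, hfg⟩
    have := sub_lt_sub_and_deriv_lt_of_ode hρ hv hu hODEv hODEu haL (by linarith) h₁.le
      (Or.inl (by linarith))
    exact ⟨by linarith, this.2⟩
  · rintro ⟨rfl, h₀, h₁⟩
    have := sub_lt_sub_and_deriv_lt_of_ode hρ hv hu hODEv hODEu haL (by linarith) h₁.le
      (Or.inr h₁)
    exact ⟨by linarith, this.2⟩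
end

section
/- Let u: [0,∞) → [1,∞) be C¹ on (0,∞), satisfy the normal reflection condition u(0) + u'(0+) = 0, and solve u''(a) = g(u(a), u'(a)) where g(z₁,z₂) > 0 whenever z₁ > 1, on the region {a : u(a) > 1}, with u' ≤ 0 there. If ā := sup{a : u(a) > 1} < ∞ and u'(ā−) ≤ 0, then u' < 0 on (0, ā); i.e., u is strictly decreasing on (0, ā). -/
open Filter

/-- Let `u : [0,∞) → [1,∞)` be `C¹` on `(0,∞)`, satisfy the normal
reflection condition `u(0) + u'(0+) = 0`, and solve `u'' = g(u, u')` with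
`g(z₁,z₂) > 0` whenever `z₁ > 1` on the region where `u > 1`, with `u' ≤ 0`
there. If `ā = sup{a : u(a) > 1} < ∞` and `u'(ā−) ≤ 0`, then `u' < 0` on
`(0, ā)`, i.e. `u` is strictly decreasing there. -/
theorem payoff_strictly_decreasing
    (u : ℝ → ℝ) (g : ℝ → ℝ → ℝ) (abar : ℝ)
    (hrange : ∀ a : ℝ, 0 ≤ a → 1 ≤ u a)
    (hC1 : ∀ a : ℝ, 0 < a → DifferentiableAt ℝ u a)
    (hderC : ContinuousOn (deriv u) (Set.Ioi 0))
    (hreflect : u 0 + derivWithin u (Set.Ici 0) 0 = 0)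
    (hg : ∀ z₁ z₂ : ℝ, 1 < z₁ → 0 < g z₁ z₂)
    (hODE : ∀ a : ℝ, 0 < a → 1 < u a → deriv (deriv u) a = g (u a) (deriv u a))
    (hmono : ∀ a : ℝ, 0 < a → 1 < u a → deriv u a ≤ 0)
    (hbdd : BddAbove {a : ℝ | 0 ≤ a ∧ 1 < u a})
    (habar : abar = sSup {a : ℝ | 0 ≤ a ∧ 1 < u a})
    (hsp : ∃ L : ℝ, L ≤ 0 ∧ Tendsto (deriv u) (nhdsWithin abar (Set.Iio abar)) (nhds L)) :
    (∀ a ∈ Set.Ioo 0 abar, deriv u a < 0) ∧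
    StrictAntiOn u (Set.Ioo 0 abar) := by
  -- Step 1 : `u > 1` on `(0, abar)`.
  have key : ∀ a ∈ Set.Ioo 0 abar, 1 < u a := by
    intro a ha
    by_contra h
    have hua : u a = 1 := le_antisymm (not_lt.mp h) (hrange a ha.1.le)
    have hSne : {x : ℝ | 0 ≤ x ∧ 1 < u x}.Nonempty := by
      by_contra hS
      rw [Set.not_nonempty_iff_eq_empty] at hS
      rw [hS, Real.sSup_empty] at habar
      exact absurd (habar ▸ ha.2) (not_lt.mpr ha.1.le)
    obtain ⟨b, hbS, hab⟩ := exists_lt_of_lt_csSup hSne (habar ▸ ha.2)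
    have hub : 1 < u b := hbS.2
    set T := {x ∈ Set.Icc a b | u x = 1} with hTdef
    have hTne : T.Nonempty := ⟨a, ⟨le_refl a, hab.le⟩, hua⟩
    have hTbdd : BddAbove T := ⟨b, fun x hx => hx.1.2⟩
    have hucont : ContinuousOn u (Set.Icc a b) := fun x hx =>
      (hC1 x (lt_of_lt_of_le ha.1 hx.1)).continuousAt.continuousWithinAt
    have hTclosed : IsClosed T :=
      hucont.preimage_isClosed_of_isClosed isClosed_Icc isClosed_singleton
    set c := sSup T with hcdef
    have hcT : c ∈ T := hTclosed.csSup_mem hTne hTbdd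
    have hca : a ≤ c := hcT.1.1
    have hcb : c < b := lt_of_le_of_ne hcT.1.2 (by
      intro hcb; rw [hcb] at hcT; exact absurd hcT.2 (ne_of_gt hub))
    have hc1 : u c = 1 := hcT.2
    have hgt : ∀ x ∈ Set.Ioc c b, 1 < u x := by
      intro x hx
      rcases lt_or_eq_of_le (hrange x (le_trans ha.1.le (le_trans hca hx.1.le))) with h1 | h1
      · exact h1
      · exact absurd (le_csSup hTbdd (⟨⟨le_trans hca hx.1.le, hx.2⟩, h1.symm⟩ : x ∈ T))
          (not_le.mpr hx.1)
    have hucont' : ContinuousOn u (Set.Icc c b) :=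
      hucont.mono (Set.Icc_subset_Icc hca le_rfl)
    have hdiff : DifferentiableOn ℝ u (Set.Ioo c b) := fun x hx =>
      (hC1 x (lt_of_lt_of_le ha.1 (le_trans hca hx.1.le))).differentiableWithinAt
    obtain ⟨d, hd, hderiv⟩ := exists_deriv_eq_slope u hcb hucont' hdiff
    have hpos : 0 < deriv u d := by
      rw [hderiv, hc1]
      exact div_pos (by linarith) (by linarith [hd.1, hd.2])
    have hd0 : 0 < d := lt_of_lt_of_le ha.1 (le_trans hca hd.1.le)
    exact absurd (hmono d hd0 (hgt d ⟨hd.1, hd.2.le⟩)) (not_le.mpr hpos)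
  -- Step 2 : `deriv u < 0` on `(0, abar)`.
  have hneg : ∀ a ∈ Set.Ioo 0 abar, deriv u a < 0 := by
    intro a ha
    rcases lt_or_eq_of_le (hmono a ha.1 (key a ha)) with h | h
    · exact h
    exfalso
    have hc : 0 < g (u a) (deriv u a) := hg _ _ (key a ha)
    have hODEa := hODE a ha.1 (key a ha)
    have hdiff2 : DifferentiableAt ℝ (deriv u) a := by
      by_contra hnd
      rw [deriv_zero_of_not_differentiableAt hnd] at hODEa
      exact absurd hODEa.symm (ne_of_gt hc)
    have hHD : HasDerivAt (deriv u) (g (u a) (deriv u a)) a := by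
      have := hdiff2.hasDerivAt
      rwa [hODEa] at this
    have hslope : Tendsto (slope (deriv u) a) (nhdsWithin a {a}ᶜ)
        (nhds (g (u a) (deriv u a))) := hasDerivAt_iff_tendsto_slope.mp hHD
    have hslope' : Tendsto (slope (deriv u) a) (nhdsWithin a (Set.Ioi a))
        (nhds (g (u a) (deriv u a))) :=
      hslope.mono_left (nhdsWithin_mono a (fun x hx => ne_of_gt hx))
    have hev : ∀ᶠ x in nhdsWithin a (Set.Ioi a), 0 < slope (deriv u) a x :=
      hslope'.eventually (eventually_gt_nhds hc)
    have hev2 : ∀ᶠ x in nhdsWithin a (Set.Ioi a), x < abar :=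
      eventually_nhdsWithin_of_eventually_nhds (Filter.Tendsto.eventually_lt_const ha.2 tendsto_id)
    obtain ⟨x, hx1, hx2⟩ := (hev.and (hev2.and self_mem_nhdsWithin)).exists
    obtain ⟨hxab, hxa⟩ := hx2
    have hxa' : a < x := hxa
    have hslx : 0 < (deriv u x - deriv u a) / (x - a) := by
      rwa [slope_def_field] at hx1
    have hdx : 0 < deriv u x := by
      rw [h] at hslx
      have := (div_pos_iff.mp hslx)
      rcases this with ⟨h1, _⟩ | ⟨_, h2⟩
      · linarith
      · linarith
    exact absurd (hmono x (lt_trans ha.1 hxa') (key x ⟨lt_trans ha.1 hxa', hxab⟩))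
      (not_le.mpr hdx)
  refine ⟨hneg, ?_⟩
  exact strictAntiOn_of_deriv_neg (convex_Ioo 0 abar)
    (fun x hx => (hC1 x hx.1).continuousAt.continuousWithinAt)
    (fun x hx => hneg x (by rwa [interior_Ioo] at hx))
end
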